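/- For every integer n ≥ 1, 2(1+x)^{n−1} A_n(x) = ∑_{k=0}^{n} C(n,k) T_k(x) T_{n−k}(x), where C(n,k) is the binomial coefficient, as an identity of polynomials. -/

import Mathlib

/-!
Both sides satisfy the same first-order recurrence for the derivation `δ = x (1 - x²) d/dx`.
The recurrence defining `T(n,k)` says `T_{n+1} = δ T_n + (x + 2n x²) T_n`, and the Leibniz rule
turns this into `S_{n+1} = δ S_n + (2x + 2n x²) S_n` for the binomial convolution
`S_n = ∑ C(n,k) T_k T_{n-k}`. Inserting the letter `n` into the `n + 1` gaps of a permutation of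
`S_n` keeps its number `d` of descents for the `d + 1` gaps lying at the end or inside a descent,
and raises it by one otherwise; this gives `A_{n+1} = x (1 - x) A_n' + (n + 1) x A_n`, from which
`2 (1 + x)^{n-1} A_n` satisfies the recurrence of `S_n` as well. Both sides equal `2x` at `n = 1`.
-/

/-- The numbers T(n,k) defined by T(1,1) = 1, T(1,k) = 0 for k ≠ 1, and the
recurrence T(n+1,k) = k·T(n,k) + T(n,k-1) + (2n-k+2)·T(n,k-2) for n ≥ 1.
(The value at n = 0 encodes T_0(x) = 1.) -/
def Tc : ℕ → ℤ → ℤ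
  | 0, k => if k = 0 then 1 else 0
  | 1, k => if k = 1 then 1 else 0
  | (n+2), k => k * Tc (n+1) k + Tc (n+1) (k-1) + (2*((n : ℤ)+1) - k + 2) * Tc (n+1) (k-2)

/-- The polynomial T_n(x) = ∑_(k=1)^(2n-1) T(n,k) x^k for n ≥ 1, with T_0(x) = 1. -/
noncomputable def Tpoly (n : ℕ) : Polynomial ℤ :=
  if n = 0 then 1 else ∑ k ∈ Finset.Icc 1 (2*n - 1), Polynomial.C (Tc n k) * Polynomial.X ^ k

/-- The value of the permutation π ∈ S_n at the (0-based) position i. -/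
def permVal {n : ℕ} (π : Equiv.Perm (Fin n)) (i : ℕ) : ℕ :=
  if h : i < n then (π ⟨i, h⟩ : ℕ) else n

/-- The number of descents of π ∈ S_n. -/
def desPerm {n : ℕ} (π : Equiv.Perm (Fin n)) : ℕ :=
  ((Finset.range (n - 1)).filter (fun i => permVal π (i+1) < permVal π i)).card

/-- The Eulerian polynomial A_n(x) = ∑_(π ∈ S_n) x^(des(π)+1). -/
noncomputable def eulerianPoly (n : ℕ) : Polynomial ℤ :=
  ∑ π : Equiv.Perm (Fin n), Polynomial.X ^ (desPerm π + 1)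

open Polynomial Finset

section BinomialConvolution

variable {R A : Type*} [CommSemiring R] [CommSemiring A] [Algebra R A]

def binomConv (f g : ℕ → A) (n : ℕ) : A :=
  ∑ ij ∈ antidiagonal n, (n.choose ij.1 : A) * (f ij.1 * g ij.2)

theorem binomConv_succ (D : Derivation R A A) (a b c : A) {f g : ℕ → A}
    (hf : ∀ n, f (n + 1) = D (f n) + (a + n * b) * f n)
    (hg : ∀ n, g (n + 1) = D (g n) + (c + n * b) * g n) (n : ℕ) :
    binomConv f g (n + 1) = D (binomConv f g n) + (a + c + n * b) * binomConv f g n := by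
  rw [binomConv, sum_antidiagonal_choose_succ_mul (fun i j => f i * g j), ← sum_add_distrib,
    binomConv, map_sum, mul_sum, ← sum_add_distrib]
  refine sum_congr rfl fun ij hij => ?_
  rw [HasAntidiagonal.mem_antidiagonal] at hij
  rw [Nat.choose_symm_of_eq_add hij.symm, hf, hg, D.leibniz, D.leibniz, D.map_natCast, ← hij]
  simp only [smul_eq_mul, Nat.cast_add]
  ring

end BinomialConvolution

theorem Tc_succ (n : ℕ) (k : ℤ) :
    Tc (n + 1) k = k * Tc n k + Tc n (k - 1) + (2 * n - k + 2) * Tc n (k - 2) := by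
  rcases n with _ | n
  · simp only [Tc]
    split_ifs <;> omega
  · rw [Tc]
    push_cast
    ring

theorem Tc_of_neg (n : ℕ) {k : ℤ} (hk : k < 0) : Tc n k = 0 := by
  induction n generalizing k with
  | zero => simp [Tc, hk.ne]
  | succ n ih =>
    rw [Tc_succ, ih hk, ih (by omega), ih (by omega)]
    ring

theorem Tc_zero_right {n : ℕ} (hn : n ≠ 0) : Tc n 0 = 0 := by
  obtain ⟨n, rfl⟩ := Nat.exists_eq_succ_of_ne_zero hn
  simp [Tc_succ, Tc_of_neg]

theorem Tc_of_two_mul_le {n : ℕ} (hn : n ≠ 0) {k : ℤ} (hk : 2 * n ≤ k) : Tc n k = 0 := by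
  induction n, Nat.one_le_iff_ne_zero.mpr hn using Nat.le_induction generalizing k with
  | base => simp only [Tc]; split_ifs <;> omega
  | succ n hn ih =>
    push_cast at hk
    rw [Tc_succ, ih (by omega) (by omega), ih (by omega) (by omega), ih (by omega) (by omega)]
    ring

theorem coeff_Tpoly (n k : ℕ) : (Tpoly n).coeff k = Tc n k := by
  rcases eq_or_ne n 0 with rfl | hn
  · simp [Tpoly, Tc, coeff_one]
  simp only [Tpoly, if_neg hn, finsetSum_coeff, coeff_C_mul_X_pow, sum_ite_eq, mem_Icc]
  split_ifs with hk
  · rfl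
  · rcases Nat.eq_zero_or_pos k with rfl | hk0
    · exact (Tc_zero_right hn).symm
    · exact (Tc_of_two_mul_le hn (by omega)).symm

theorem Tpoly_succ (n : ℕ) :
    Tpoly (n + 1) =
      X * (1 - X ^ 2) * derivative (Tpoly n) + (X + 2 * (n : ℤ[X]) * X ^ 2) * Tpoly n := by
  have hexpand : X * (1 - X ^ 2) * derivative (Tpoly n) + (X + 2 * (n : ℤ[X]) * X ^ 2) * Tpoly n =
      X * derivative (Tpoly n) - X ^ 3 * derivative (Tpoly n) + X * Tpoly n +
        C (2 * n : ℤ) * (X ^ 2 * Tpoly n) := by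
    simp only [map_mul, map_ofNat, map_natCast]
    ring
  ext k
  rw [hexpand]
  rcases k with _ | _ | _ | k
  · simp [coeff_Tpoly, Tc_succ, Tc_of_neg]
  all_goals
    simp only [coeff_add, coeff_sub, coeff_C_mul, coeff_X_pow_mul', coeff_X_mul, coeff_derivative,
      coeff_Tpoly, Tc_succ]
    push_cast
  · rw [Tc_of_neg n (k := -1) (by norm_num)]
    ring
  · ring
  · ring_nf

theorem Tpoly_zero : Tpoly 0 = 1 := if_pos rfl

theorem Tpoly_one : Tpoly 1 = X := by
  simp [Tpoly_succ 0, Tpoly_zero]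

theorem sum_range_choose_mul_Tpoly (n : ℕ) :
    ∑ k ∈ range (n + 1), C (n.choose k : ℤ) * Tpoly k * Tpoly (n - k) =
      binomConv Tpoly Tpoly n := by
  rw [binomConv, Nat.sum_antidiagonal_eq_sum_range_succ_mk]
  exact sum_congr rfl fun k _ => by rw [map_natCast, mul_assoc]

namespace Equiv.Perm

variable {n : ℕ}

theorem permVal_of_lt (σ : Perm (Fin n)) {i : ℕ} (h : i < n) : permVal σ i = σ ⟨i, h⟩ :=
  dif_pos h

theorem permVal_of_le (σ : Perm (Fin n)) {i : ℕ} (h : n ≤ i) : permVal σ i = n :=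
  dif_neg (by omega)

theorem permVal_le (σ : Perm (Fin n)) (i : ℕ) : permVal σ i ≤ n := by
  unfold permVal
  split_ifs <;> omega

def IsDescentAt (σ : Perm (Fin n)) (i : ℕ) : Prop :=
  permVal σ (i + 1) < permVal σ i

instance (σ : Perm (Fin n)) : DecidablePred σ.IsDescentAt := fun _ =>
  inferInstanceAs (Decidable (_ < _))

theorem not_isDescentAt_of_le (σ : Perm (Fin n)) {i : ℕ} (h : n - 1 ≤ i) :
    ¬ σ.IsDescentAt i := by
  rw [IsDescentAt, permVal_of_le σ (by omega), not_lt]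
  exact permVal_le σ i

theorem desPerm_eq_sum (σ : Perm (Fin n)) {m : ℕ} (hm : n - 1 ≤ m) :
    desPerm σ = ∑ i ∈ range m, if σ.IsDescentAt i then 1 else 0 := by
  rw [desPerm, card_filter]
  refine sum_subset (range_subset_range.mpr hm) fun i _ hi => ?_
  exact if_neg (σ.not_isDescentAt_of_le (by simpa using hi))

/-- In one-line notation, `σ` with the letter `n` inserted at position `j`. -/
def insertMax (j : Fin (n + 1)) (σ : Perm (Fin n)) : Perm (Fin (n + 1)) :=
  (finSuccEquiv' j).trans ((optionCongr σ).trans (finSuccEquiv' (Fin.last n)).symm)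

section insertMax

variable (j : Fin (n + 1)) (σ : Perm (Fin n))

@[simp]
theorem insertMax_apply_self : insertMax j σ j = Fin.last n := by
  simp [insertMax]

@[simp]
theorem insertMax_apply_succAbove (m : Fin n) :
    insertMax j σ (j.succAbove m) = (σ m).castSucc := by
  simp [insertMax]

theorem permVal_insertMax {i : ℕ} (hi : i ≤ n) :
    permVal (insertMax j σ) i =
      if i < j then permVal σ i else if i = j then n else permVal σ (i - 1) := by
  rw [permVal_of_lt _ (Nat.lt_succ_of_le hi)]
  split_ifs with hlt heq
  · have hin : i < n := by omega
    rw [permVal_of_lt σ hin, show (⟨i, _⟩ : Fin (n + 1)) = j.succAbove ⟨i, hin⟩ from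
      (Fin.succAbove_of_castSucc_lt j ⟨i, hin⟩ hlt).symm, insertMax_apply_succAbove,
      Fin.val_castSucc]
  · simp [show (⟨i, _⟩ : Fin (n + 1)) = j from Fin.ext heq]
  · have hin : i - 1 < n := by omega
    rw [permVal_of_lt σ hin, show (⟨i, _⟩ : Fin (n + 1)) = j.succAbove ⟨i - 1, hin⟩ by
      rw [Fin.succAbove_of_le_castSucc j _ (by simp [Fin.le_def]; omega)]; ext; simp; omega,
      insertMax_apply_succAbove, Fin.val_castSucc]

theorem isDescentAt_insertMax_of_lt {i : ℕ} (h : i + 1 < j) :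
    (insertMax j σ).IsDescentAt i ↔ σ.IsDescentAt i := by
  rw [IsDescentAt, IsDescentAt, permVal_insertMax j σ (by omega),
    permVal_insertMax j σ (by omega), if_pos h, if_pos (by omega)]

theorem not_isDescentAt_insertMax_of_succ_eq {i : ℕ} (h : i + 1 = j) :
    ¬ (insertMax j σ).IsDescentAt i := by
  rw [IsDescentAt, permVal_insertMax j σ (by omega), permVal_insertMax j σ (by omega),
    if_neg (by omega), if_pos h, if_pos (by omega), not_lt]
  exact permVal_le σ i

theorem isDescentAt_insertMax_self : (insertMax j σ).IsDescentAt j ↔ (j : ℕ) < n := by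
  have hj : (j : ℕ) ≤ n := j.is_le
  rw [IsDescentAt, permVal_insertMax j σ hj, if_neg (lt_irrefl _), if_pos rfl]
  rcases hj.lt_or_eq with hjn | hjn
  · rw [permVal_insertMax j σ (show (j : ℕ) + 1 ≤ n from hjn), if_neg (by omega),
      if_neg (by omega), Nat.add_sub_cancel, permVal_of_lt σ hjn]
    exact iff_of_true (Fin.is_lt _) hjn
  · rw [permVal_of_le _ (by omega)]
    omega

theorem isDescentAt_insertMax_succ {i : ℕ} (h : (j : ℕ) ≤ i) :
    (insertMax j σ).IsDescentAt (i + 1) ↔ σ.IsDescentAt i := by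
  by_cases hi : n - 1 ≤ i
  · exact iff_of_false (not_isDescentAt_of_le _ (by omega)) (not_isDescentAt_of_le σ hi)
  rw [IsDescentAt, IsDescentAt, permVal_insertMax j σ (by omega),
    permVal_insertMax j σ (by omega), if_neg (by omega), if_neg (by omega), if_neg (by omega),
    if_neg (by omega), Nat.add_sub_cancel, Nat.add_sub_cancel]

theorem sum_range_isDescentAt_insertMax_add :
    (∑ i ∈ range j, if (insertMax j σ).IsDescentAt i then 1 else 0) +
        (if 0 < (j : ℕ) ∧ σ.IsDescentAt (j - 1) then 1 else 0) =
      ∑ i ∈ range j, if σ.IsDescentAt i then 1 else 0 := by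
  cases hJ : (j : ℕ) with
  | zero => simp
  | succ J =>
    have hpred : ¬ (insertMax j σ).IsDescentAt J :=
      not_isDescentAt_insertMax_of_succ_eq j σ hJ.symm
    have hlow : ∀ i ∈ range J, (insertMax j σ).IsDescentAt i ↔ σ.IsDescentAt i :=
      fun i hi => isDescentAt_insertMax_of_lt j σ (by rw [mem_range] at hi; omega)
    simp only [sum_range_succ, if_neg hpred, Nat.succ_pos, true_and, Nat.add_sub_cancel, add_zero]
    rw [sum_congr rfl fun i hi => if_congr (hlow i hi) rfl rfl]

/-- Gap `j` of `σ` lies between positions `j - 1` and `j`; inserting `n` there creates no new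
descent exactly for these gaps. -/
def IsDescentGap (j : ℕ) : Prop :=
  j = n ∨ (0 < j ∧ σ.IsDescentAt (j - 1))

instance : DecidablePred σ.IsDescentGap := fun _ =>
  inferInstanceAs (Decidable (_ ∨ _))

theorem desPerm_insertMax :
    desPerm (insertMax j σ) = if σ.IsDescentGap j then desPerm σ else desPerm σ + 1 := by
  have hj : (j : ℕ) ≤ n := j.is_le
  have hπ : desPerm (insertMax j σ) =
      (∑ i ∈ range j, if (insertMax j σ).IsDescentAt i then 1 else 0) +
        ((∑ i ∈ range (n - j), if σ.IsDescentAt (j + i) then 1 else 0) +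
          if (j : ℕ) < n then 1 else 0) := by
    rw [desPerm_eq_sum _ (m := j + (n - j + 1)) (by omega), sum_range_add, sum_range_succ']
    simp only [← add_assoc, isDescentAt_insertMax_succ j σ (Nat.le_add_right _ _), add_zero,
      isDescentAt_insertMax_self]
  have hσ : desPerm σ = (∑ i ∈ range j, if σ.IsDescentAt i then 1 else 0) +
      ∑ i ∈ range (n - j), if σ.IsDescentAt (j + i) then 1 else 0 := by
    rw [desPerm_eq_sum σ (m := j + (n - j)) (by omega), sum_range_add]
  have hpre := sum_range_isDescentAt_insertMax_add j σ
  by_cases hjn : (j : ℕ) = n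
  · have hc : ¬ (0 < (j : ℕ) ∧ σ.IsDescentAt (j - 1)) := fun h =>
      not_isDescentAt_of_le σ (by omega) h.2
    rw [if_neg hc] at hpre
    rw [if_neg (by omega)] at hπ
    rw [if_pos (show σ.IsDescentGap j from Or.inl hjn)]
    omega
  · rw [if_pos (by omega)] at hπ
    by_cases hc : 0 < (j : ℕ) ∧ σ.IsDescentAt (j - 1)
    · rw [if_pos hc] at hpre
      rw [if_pos (show σ.IsDescentGap j from Or.inr hc)]
      omega
    · rw [if_neg hc] at hpre
      rw [if_neg (show ¬ σ.IsDescentGap j by rw [IsDescentGap]; tauto)]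
      omega

theorem card_filter_isDescentGap : #{j : Fin (n + 1) | σ.IsDescentGap j} = desPerm σ + 1 := by
  have hsplit (i : ℕ) : (if σ.IsDescentGap i then 1 else 0) =
      (if 0 < i ∧ σ.IsDescentAt (i - 1) then 1 else 0) + if i = n then 1 else 0 := by
    by_cases hi : i = n
    · simp [IsDescentGap, hi, not_isDescentAt_of_le σ le_rfl]
    · simp [IsDescentGap, hi]
  rw [card_filter, Fin.sum_univ_eq_sum_range (fun i => if σ.IsDescentGap i then 1 else 0),
    desPerm_eq_sum σ (m := n) (by omega)]
  simp only [hsplit, sum_add_distrib, sum_ite_eq', mem_range, lt_add_one, if_true,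
    sum_range_succ']
  simp

theorem sum_pow_desPerm_insertMax {R : Type*} [CommRing R] (x : R) :
    ∑ j : Fin (n + 1), x ^ (desPerm (insertMax j σ) + 1) =
      (desPerm σ + 1 : R) * x ^ (desPerm σ + 1) +
        ((n : R) - desPerm σ) * x ^ (desPerm σ + 2) := by
  have hterm (j : Fin (n + 1)) : x ^ (desPerm (insertMax j σ) + 1) =
      x ^ (desPerm σ + 2) -
        (if σ.IsDescentGap j then 1 else 0) * (x ^ (desPerm σ + 2) - x ^ (desPerm σ + 1)) := by
    rw [desPerm_insertMax]
    split_ifs <;> ring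
  simp only [hterm, sum_sub_distrib, ← sum_mul, sum_boole, card_filter_isDescentGap, sum_const,
    card_univ, Fintype.card_fin, nsmul_eq_mul]
  push_cast
  ring

end insertMax

theorem insertMax_bijective :
    Function.Bijective fun p : Fin (n + 1) × Perm (Fin n) => insertMax p.1 p.2 := by
  refine (Fintype.bijective_iff_injective_and_card _).mpr
    ⟨?_, by simp [Fintype.card_perm, Nat.factorial_succ]⟩
  rintro ⟨j, σ⟩ ⟨j', σ'⟩ h
  simp only at h
  obtain rfl : j = j' :=
    (insertMax j σ).injective (by rw [insertMax_apply_self, h, insertMax_apply_self])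
  obtain rfl : σ = σ' := Equiv.ext fun m => Fin.castSucc_injective n <| by
    rw [← insertMax_apply_succAbove, ← insertMax_apply_succAbove, h]
  rfl

end Equiv.Perm

open Equiv.Perm in
theorem eulerianPoly_succ (n : ℕ) :
    eulerianPoly (n + 1) =
      X * (1 - X) * derivative (eulerianPoly n) + ((n : ℤ[X]) + 1) * X * eulerianPoly n := by
  rw [eulerianPoly, ← (Equiv.ofBijective _ insertMax_bijective).sum_comp, Fintype.sum_prod_type,
    sum_comm, eulerianPoly, derivative_sum, mul_sum, mul_sum, ← sum_add_distrib]
  refine sum_congr rfl fun σ _ => ?_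
  simp only [Equiv.ofBijective_apply]
  rw [sum_pow_desPerm_insertMax, derivative_X_pow, Nat.add_sub_cancel, Nat.cast_succ, map_add,
    map_natCast, map_one]
  ring

theorem eulerianPoly_one : eulerianPoly 1 = X := by
  simp [eulerianPoly, desPerm]

theorem one_add_X_mul_derivative_one_add_X_pow {R : Type*} [CommRing R] (m : ℕ) :
    (1 + X) * derivative ((1 + X : R[X]) ^ m) = (m : R[X]) * (1 + X) ^ m := by
  rcases m with _ | m
  · simp
  · rw [derivative_pow_succ, derivative_add, derivative_one, derivative_X, map_add, map_natCast,
      map_one]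
    push_cast
    ring

theorem two_mul_one_add_X_pow_mul_eulerianPoly_succ (m : ℕ) :
    2 * (1 + X) ^ (m + 1) * eulerianPoly (m + 2) =
      X * (1 - X ^ 2) * derivative (2 * (1 + X) ^ m * eulerianPoly (m + 1)) +
        (X + X + ((m : ℤ[X]) + 1) * (2 * X ^ 2)) * (2 * (1 + X) ^ m * eulerianPoly (m + 1)) := by
  rw [eulerianPoly_succ (m + 1), derivative_mul, derivative_mul, derivative_ofNat, zero_mul,
    zero_add]
  push_cast
  linear_combination
    (-2 * X * (1 - X) * eulerianPoly (m + 1)) * one_add_X_mul_derivative_one_add_X_pow (R := ℤ) m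

theorem two_mul_one_add_X_pow_mul_eulerianPoly_eq_binomConv (m : ℕ) :
    2 * (1 + X) ^ m * eulerianPoly (m + 1) = binomConv Tpoly Tpoly (m + 1) := by
  let D : Derivation ℤ ℤ[X] ℤ[X] := ((X : ℤ[X]) * (1 - X ^ 2)) • derivative'
  have hD (p : ℤ[X]) : D p = X * (1 - X ^ 2) * derivative p := rfl
  have hT (k : ℕ) : Tpoly (k + 1) = D (Tpoly k) + (X + (k : ℤ[X]) * (2 * X ^ 2)) * Tpoly k := by
    rw [hD, Tpoly_succ]
    ring
  induction m with
  | zero =>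
    rw [← sum_range_choose_mul_Tpoly]
    simp [sum_range_succ, eulerianPoly_one, Tpoly_zero, Tpoly_one, two_mul]
  | succ m ih =>
    rw [binomConv_succ D X (2 * X ^ 2) X hT hT, ← ih, hD, Nat.cast_succ,
      two_mul_one_add_X_pow_mul_eulerianPoly_succ]

/-- For n ≥ 1, 2(1+x)^(n-1) A_n(x) = ∑_(k=0)^(n) C(n,k) T_k(x) T_(n-k)(x). -/
theorem stmt10 (n : ℕ) (hn : 1 ≤ n) :
    2 * (1 + Polynomial.X) ^ (n - 1) * eulerianPoly n
      = ∑ k ∈ Finset.range (n + 1),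
          Polynomial.C ((n.choose k : ℤ)) * Tpoly k * Tpoly (n - k) := by
  obtain ⟨m, rfl⟩ := Nat.exists_eq_add_of_le' hn
  rw [sum_range_choose_mul_Tpoly, Nat.add_sub_cancel,
    two_mul_one_add_X_pow_mul_eulerianPoly_eq_binomConv]
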